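/- arXiv:1509.01594 — 4 statements merged into one kernel-verified Lean document; each statement's English description precedes it below -/
import Mathlib

section
/- With notation as above, for each root a, the element n(a^∨)·a^∨ lies in the sublattice Λ₀ := {λ ∈ Λ | B(λ, b^∨) ≡ 0 mod n for all simple coroots b^∨}, where n(a^∨) = n/gcd(n, Q(a^∨)). -/
/-!
Bilinearity and the factorisation `B(λ, a∨) = ⟨λ, a⟩ Q(a∨)` give
`B(n(a∨) a∨, b∨) = n(a∨) ⟨b∨, a⟩ Q(a∨)`, and `n(a∨) Q(a∨)` is a multiple of `n`
because `gcd(n, Q(a∨))` divides `Q(a∨)`.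
-/

theorem Int.natCast_dvd_div_gcd_mul (n : ℕ) (q : ℤ) :
    (n : ℤ) ∣ ((n / Int.gcd n q : ℕ) : ℤ) * q := by
  have hgn : Int.gcd n q ∣ n := Int.natCast_dvd_natCast.mp (Int.gcd_dvd_left (n : ℤ) q)
  have hcancel : ((n / Int.gcd n q : ℕ) : ℤ) * Int.gcd n q = n := by
    exact_mod_cast Nat.div_mul_cancel hgn
  simpa only [hcancel] using mul_dvd_mul_left ((n / Int.gcd n q : ℕ) : ℤ) (Int.gcd_dvd_right n q)

theorem polarization_comm {Λ : Type*} [AddCommMagma Λ] {Q : Λ → ℤ} {B : Λ → Λ → ℤ}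
    (hB : ∀ x y, B x y = Q (x + y) - Q x - Q y) (x y : Λ) : B x y = B y x := by
  rw [hB, hB, add_comm x y]
  ring

theorem na_smul_coroot_mem_Lambda_zero_general
    {Λ : Type*} [AddCommGroup Λ] (n : ℕ)
    (Q : Λ → ℤ) (B : Λ → Λ → ℤ)
    (hB : ∀ x y, B x y = Q (x + y) - Q x - Q y)
    (hBsmul : ∀ (k : ℤ) (x y : Λ), B (k • x) y = k * B x y)
    {ι : Type*} (coroot : ι → Λ)  -- the simple coroots b∨
    (av : Λ) (pair : Λ → ℤ)       -- coroot a∨ of a root a, pairing ⟨·, a⟩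
    (hfact : ∀ lam, B lam av = pair lam * Q av) :
    ∀ i : ι, (n : ℤ) ∣ B (((n / Int.gcd (n : ℤ) (Q av) : ℕ) : ℤ) • av) (coroot i) := by
  intro i
  rw [hBsmul, polarization_comm hB, hfact, mul_left_comm]
  exact (Int.natCast_dvd_div_gcd_mul n (Q av)).mul_left _

/-- With `Q` a Weyl-invariant quadratic form on the coweight
lattice `Λ`, `B` its associated bilinear form (ℤ-bilinear, and satisfying
`B(λ, a∨) = ⟨λ,a⟩·Q(a∨)` for the root `a` with coroot `a∨`), and `n ≥ 1`,
the element `n(a∨)·a∨` (with `n(a∨) = n / gcd(n, Q(a∨))`) lies in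
`Λ₀ = {λ | B(λ, b∨) ≡ 0 mod n for every simple coroot b∨}`. -/
theorem na_smul_coroot_mem_Lambda_zero
    {Λ : Type*} [AddCommGroup Λ] (n : ℕ) (hn : 0 < n)
    (Q : Λ → ℤ) (B : Λ → Λ → ℤ)
    (hB : ∀ x y, B x y = Q (x + y) - Q x - Q y)
    (hBsmul : ∀ (k : ℤ) (x y : Λ), B (k • x) y = k * B x y)
    {ι : Type*} (coroot : ι → Λ)  -- the simple coroots b∨
    (av : Λ) (pair : Λ → ℤ)       -- coroot a∨ of a root a, pairing ⟨·, a⟩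
    (hfact : ∀ lam, B lam av = pair lam * Q av) :
    ∀ i : ι, (n : ℤ) ∣ B (((n / Int.gcd (n : ℤ) (Q av) : ℕ) : ℤ) • av) (coroot i) :=
  na_smul_coroot_mem_Lambda_zero_general n Q B hB hBsmul coroot av pair hfact
end

section
/- Let R^∨ be a rank-two irreducible root system with short simple coroot a^∨ and long simple coroot b^∨, Weyl-invariant quadratic form Q, and fix n ≥ 1 with n(c^∨) := n/gcd(n, Q(c^∨)). If n(a^∨) ≠ n(b^∨), then n(a^∨)/n(b^∨) = Q(b^∨)/Q(a^∨), and consequently Q(n(b^∨)·b^∨)/Q(n(a^∨)·a^∨) = Q(a^∨)/Q(b^∨). -/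
/-- Helper: if `Qb = k*Qa` with `k` prime, and the two quotients differ,
then `gcd n Qb = k * gcd n Qa` and the key identity holds. -/
lemma na_ratio_prime_case (n Qa k : ℕ) (hn : 0 < n) (hQa : 0 < Qa)
    (hk : Nat.Prime k)
    (hne : n / Nat.gcd n Qa ≠ n / Nat.gcd n (k * Qa)) :
    (n / Nat.gcd n Qa) * Qa = (n / Nat.gcd n (k * Qa)) * (k * Qa) := by
  set d := Nat.gcd n Qa with hd
  set g := Nat.gcd n (k * Qa) with hg
  have hd0 : 0 < d := Nat.gcd_pos_of_pos_left _ hn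
  have hdg : d ∣ g :=
    Nat.dvd_gcd (Nat.gcd_dvd_left _ _)
      ((Nat.gcd_dvd_right _ _).trans (dvd_mul_left Qa k))
  have hgkd : g ∣ k * d := by
    have : g ∣ Nat.gcd (k * n) (k * Qa) :=
      Nat.dvd_gcd ((Nat.gcd_dvd_left _ _).trans (dvd_mul_left n k))
        (Nat.gcd_dvd_right _ _)
    rwa [Nat.gcd_mul_left] at this
  obtain ⟨m, hm⟩ := hdg
  have hmk : m ∣ k := by
    have : d * m ∣ d * k := by
      rw [← hm]; rwa [mul_comm] at hgkd
    exact (mul_dvd_mul_iff_left hd0.ne').mp this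
  rcases (Nat.Prime.eq_one_or_self_of_dvd hk m hmk) with h1 | hmk'
  · exfalso; apply hne; rw [hm, h1, mul_one]
  · -- g = d * k
    have hgdk : g = d * k := by rw [hm, hmk']
    have hgn : g ∣ n := Nat.gcd_dvd_left _ _
    have hkdvd : k ∣ n / d := by
      obtain ⟨t, ht⟩ := hgn
      refine ⟨t, ?_⟩
      rw [ht, hgdk, mul_assoc, Nat.mul_div_cancel_left _ hd0]
    have hnb : n / g = (n / d) / k := by
      rw [hgdk, Nat.div_div_eq_div_mul]
    rw [hnb]
    have : (n / d) / k * k = n / d := Nat.div_mul_cancel hkdvd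
    calc n / d * Qa = ((n / d) / k * k) * Qa := by rw [this]
      _ = (n / d) / k * (k * Qa) := by ring

/-- Rank-two irreducible root system with short simple coroot
`a∨`, long simple coroot `b∨`, Weyl-invariant quadratic form `Q` (so
`Qb/Qa ∈ {1,2,3}` with `Qa = Q(a∨)`, `Qb = Q(b∨)`), and `n ≥ 1`, with
`n(c∨) := n / gcd(n, Q(c∨))`.  If `n(a∨) ≠ n(b∨)` then
`n(a∨)/n(b∨) = Q(b∨)/Q(a∨)` (i.e. `n(a∨)·Qa = n(b∨)·Qb`), and consequently
`Q(n(b∨)·b∨)/Q(n(a∨)·a∨) = Q(a∨)/Q(b∨)` (i.e.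
`(n(b∨)²·Qb)·Qb = (n(a∨)²·Qa)·Qa`, using `Q(k·c∨) = k²·Q(c∨)`). -/
theorem na_ratio_of_ne (n Qa Qb : ℕ) (hn : 0 < n) (hQa : 0 < Qa)
    (hratio : Qb = Qa ∨ Qb = 2 * Qa ∨ Qb = 3 * Qa)
    (hne : n / Nat.gcd n Qa ≠ n / Nat.gcd n Qb) :
    (n / Nat.gcd n Qa) * Qa = (n / Nat.gcd n Qb) * Qb ∧
    ((n / Nat.gcd n Qb) ^ 2 * Qb) * Qb = ((n / Nat.gcd n Qa) ^ 2 * Qa) * Qa := by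
  have h1 : (n / Nat.gcd n Qa) * Qa = (n / Nat.gcd n Qb) * Qb := by
    rcases hratio with h | h | h
    · exact absurd rfl (h ▸ hne)
    · exact h ▸ na_ratio_prime_case n Qa 2 hn hQa Nat.prime_two (h ▸ hne)
    · exact h ▸ na_ratio_prime_case n Qa 3 hn hQa Nat.prime_three (h ▸ hne)
  refine ⟨h1, ?_⟩
  have := congrArg (· ^ 2) h1
  simp only [mul_pow] at this
  calc ((n / Nat.gcd n Qb) ^ 2 * Qb) * Qb = (n / Nat.gcd n Qb) ^ 2 * Qb ^ 2 := by ring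
    _ = (n / Nat.gcd n Qa) ^ 2 * Qa ^ 2 := this.symm
    _ = ((n / Nat.gcd n Qa) ^ 2 * Qa) * Qa := by ring
end

section
/- Let Λ^∨ = ℤa^∨ ⊕ ℤb^∨ be the coroot lattice of a rank-two irreducible root system with Weyl-invariant quadratic form Q and fix n ≥ 1. Let Λ̃^∨ be the sublattice spanned by n(a^∨)a^∨ and n(b^∨)b^∨. Then there is an isometric-up-to-scale isomorphism ψ : Λ̃^∨ ≅ Λ^∨ given either by n(a^∨)a^∨ ↦ a^∨, n(b^∨)b^∨ ↦ b^∨ (when n(a^∨) = n(b^∨)) or by n(b^∨)b^∨ ↦ a^∨, n(a^∨)a^∨ ↦ b^∨ (when n(a^∨) ≠ n(b^∨)), in the sense that the ratio Q(ψ-image of first generator) : Q(ψ-image of second generator) agrees with Q(first generator) : Q(second generator). -/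
lemma key_lcm (n q k : ℕ) (hk : k.Prime) (hn : 0 < n)
    (hne : n / Nat.gcd n q ≠ n / Nat.gcd n (k * q)) :
    (k * q) * (n / Nat.gcd n (k * q)) = q * (n / Nat.gcd n q) := by
  set g := Nat.gcd n q with hg
  set G := Nat.gcd n (k * q) with hG
  have hgpos : 0 < g := Nat.gcd_pos_of_pos_left _ hn
  have hgG : g ∣ G := Nat.dvd_gcd (Nat.gcd_dvd_left _ _)
    ((Nat.gcd_dvd_right n q).trans (dvd_mul_left q k))
  have hGkg : G ∣ k * g := by
    have : G ∣ Nat.gcd (k * n) (k * q) := Nat.dvd_gcd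
      ((Nat.gcd_dvd_left _ _).trans (dvd_mul_left n k)) (Nat.gcd_dvd_right _ _)
    simpa [Nat.gcd_mul_left] using this
  obtain ⟨d, hd⟩ := hgG
  have hdk : d ∣ k := by
    have : g * d ∣ g * k := by rw [← hd]; simpa [mul_comm] using hGkg
    exact (mul_dvd_mul_iff_left hgpos.ne').mp this
  rcases (Nat.Prime.eq_one_or_self_of_dvd hk d hdk) with h1 | hkk
  · exfalso; apply hne; rw [hd, h1, mul_one]
  · have hGeq : G = k * g := by rw [hd, hkk, mul_comm]
    have hGn : G ∣ n := Nat.gcd_dvd_left _ _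
    obtain ⟨m, hm⟩ := hGn
    have hng : n / g = k * m := by
      rw [hm, hGeq]
      rw [mul_assoc, mul_comm g m, ← mul_assoc, Nat.mul_div_cancel _ hgpos]
    have hnG : n / G = m := by rw [hm, Nat.mul_div_cancel_left _ (Nat.gcd_pos_of_pos_left _ hn)]
    rw [hnG, hng]; ring

/-- Rank-two setting as before: `Λ∨ = ℤa∨ ⊕ ℤb∨ ≅ ℤ × ℤ` with
`a∨ = (1,0)` short, `b∨ = (0,1)`, `Qa = Q(a∨) > 0`, `Qb = Q(b∨)` with
`Qb/Qa ∈ {1,2,3}`, `n ≥ 1`, `n(c∨) = n/gcd(n, Q(c∨))`.  The sublattice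
`Λ̃∨ = ℤ·n(a∨)a∨ ⊕ ℤ·n(b∨)b∨` is identified with `ℤ × ℤ` via its basis
`(1,0) ↦ n(a∨)a∨`, `(0,1) ↦ n(b∨)b∨`; note `Q(n(c∨)c∨) = n(c∨)²·Q(c∨)`.
There is an isomorphism `ψ : Λ̃∨ ≅ Λ∨` sending the generators as stated,
which matches the ratios of the values of `Q` (isometric up to scale). -/
theorem sublattice_iso (n Qa Qb : ℕ) (hn : 0 < n) (hQa : 0 < Qa)
    (hratio : Qb = Qa ∨ Qb = 2 * Qa ∨ Qb = 3 * Qa) :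
    ∃ ψ : (ℤ × ℤ) ≃ₗ[ℤ] ℤ × ℤ,
      (n / Nat.gcd n Qa = n / Nat.gcd n Qb ∧
        ψ (1, 0) = (1, 0) ∧ ψ (0, 1) = (0, 1) ∧
        -- ratio Q(a∨) : Q(b∨) agrees with Q(n(a∨)a∨) : Q(n(b∨)b∨)
        Qa * ((n / Nat.gcd n Qb) ^ 2 * Qb) = Qb * ((n / Nat.gcd n Qa) ^ 2 * Qa)) ∨
      (n / Nat.gcd n Qa ≠ n / Nat.gcd n Qb ∧
        ψ (1, 0) = (0, 1) ∧ ψ (0, 1) = (1, 0) ∧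
        -- ratio Q(b∨) : Q(a∨) agrees with Q(n(a∨)a∨) : Q(n(b∨)b∨)
        Qb * ((n / Nat.gcd n Qb) ^ 2 * Qb) = Qa * ((n / Nat.gcd n Qa) ^ 2 * Qa)) := by
  by_cases h : n / Nat.gcd n Qa = n / Nat.gcd n Qb
  · exact ⟨LinearEquiv.refl ℤ (ℤ × ℤ), Or.inl ⟨h, rfl, rfl, by rw [h]; ring⟩⟩
  · refine ⟨LinearEquiv.prodComm ℤ ℤ ℤ, Or.inr ⟨h, rfl, rfl, ?_⟩⟩
    have hkey : Qb * (n / Nat.gcd n Qb) = Qa * (n / Nat.gcd n Qa) := by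
      rcases hratio with h1 | h2 | h3
      · exact absurd (by rw [h1]) h
      · rw [h2]; exact key_lcm n Qa 2 Nat.prime_two hn (by rwa [← h2])
      · rw [h3]; exact key_lcm n Qa 3 Nat.prime_three hn (by rwa [← h3])
    calc Qb * ((n / Nat.gcd n Qb) ^ 2 * Qb) = (Qb * (n / Nat.gcd n Qb)) ^ 2 := by ring
      _ = (Qa * (n / Nat.gcd n Qa)) ^ 2 := by rw [hkey]
      _ = Qa * ((n / Nat.gcd n Qa) ^ 2 * Qa) := by ring
end

section
/- Let W be a dihedral group of order 2m with generators s, t, and let S_L be the set of strings obtained from the alternating string (s, t, s, ...) of length m by replacing some entries with 1; for a string y, let y_⋆ ∈ ⟨s,t | s²=t²=1⟩ be the reduced word obtained by deleting 1's and cancelling adjacent equal letters, and let S_{L,⋆} = {y_⋆ : y ∈ S_L}, with w_{L,⋆} = s⋆t⋆s⋯ (m letters). Then the multiplication map φ : ⟨s,t⟩_⋆ → W restricts to a bijection from S_{L,⋆} \ {w_{L,⋆}} onto {w' ∈ W : w' < w₀} (the set of elements strictly below the longest element in Bruhat order). -/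
/-- Bruhat order (subword characterization): `u ≤ w` iff some reduced word for
`w` has a sublist whose product is `u`. -/
def bruhatLE {B W : Type*} [Group W] {M : CoxeterMatrix B}
    (cs : CoxeterSystem M W) (u w : W) : Prop :=
  ∃ ω : List B, cs.IsReduced ω ∧ cs.wordProd ω = w ∧
    ∃ ω' : List B, ω'.Sublist ω ∧ cs.wordProd ω' = u

namespace Stmt11

open CoxeterSystem List

lemma fin2pair {i i' : Fin 2} (h : i ≠ i') : (i = 0 ∧ i' = 1) ∨ (i = 1 ∧ i' = 0) := by
  revert h; revert i i'; decide

lemma fin2third {i i' j : Fin 2} (h : i ≠ i') (hj : j ≠ i) : j = i' := by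
  revert h hj; revert i i' j; decide

/-- The explicit word in the statement is an alternating word. -/
lemma rangeMap_eq_alt : ∀ n : ℕ,
    (List.range n).map (fun i => if i % 2 = 0 then (0 : Fin 2) else 1) =
      alternatingWord (if n % 2 = 0 then (0 : Fin 2) else 1)
        (if n % 2 = 0 then (1 : Fin 2) else 0) n := by
  intro n
  induction n with
  | zero => rfl
  | succ n ih =>
    rw [List.range_succ, List.map_append, ih, alternatingWord_succ]
    rcases Nat.even_or_odd n with hn | hn
    · have h1 : n % 2 = 0 := Nat.even_iff.mp hn
      have h2 : (n + 1) % 2 = 1 := by omega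
      simp [h1, h2, List.concat_eq_append]
    · have h1 : n % 2 = 1 := Nat.odd_iff.mp hn
      have h2 : (n + 1) % 2 = 0 := by omega
      simp [h1, h2, List.concat_eq_append]

section TwoSystems

variable {F W : Type*} [Group F] [Group W]

/-- Canonical alternating forms, simultaneously in two Coxeter systems on `Fin 2`
(uses only the relations `s i ^ 2 = 1`). -/
lemma canon_free {M1 : CoxeterMatrix (Fin 2)} {M2 : CoxeterMatrix (Fin 2)}
    (cs1 : CoxeterSystem M1 F) (cs2 : CoxeterSystem M2 W) (l : List (Fin 2)) :
    ∃ (i i' : Fin 2) (k : ℕ), i ≠ i' ∧ k ≤ l.length ∧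
      cs1.wordProd l = cs1.wordProd (alternatingWord i i' k) ∧
      cs2.wordProd l = cs2.wordProd (alternatingWord i i' k) := by
  induction l with
  | nil => exact ⟨0, 1, 0, by decide, le_refl _, rfl, rfl⟩
  | cons j l ih =>
    obtain ⟨i, i', k, hne, hk, h1, h2⟩ := ih
    match k, hk with
    | 0, hk =>
      refine ⟨j + 1, j, 1, by revert j; decide, by simp, ?_, ?_⟩
      · rw [wordProd_cons, h1]
        show _ * cs1.wordProd [] = cs1.wordProd [j]
        rw [wordProd_nil, mul_one, wordProd_singleton]
      · rw [wordProd_cons, h2]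
        show _ * cs2.wordProd [] = cs2.wordProd [j]
        rw [wordProd_nil, mul_one, wordProd_singleton]
    | k + 1, hk =>
      by_cases hj : j = (if Even k then i' else i)
      · refine ⟨i, i', k, hne, by simp only [List.length_cons]; omega, ?_, ?_⟩
        · rw [wordProd_cons, h1, alternatingWord_succ', wordProd_cons, ← mul_assoc, hj,
            simple_mul_simple_self, one_mul]
        · rw [wordProd_cons, h2, alternatingWord_succ', wordProd_cons, ← mul_assoc, hj,
            simple_mul_simple_self, one_mul]
      · have hxy : (if Even k then i' else i) ≠ (if Even (k + 1) then i' else i) := by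
          simp only [Nat.even_add_one]
          by_cases hE : Even k <;> simp [hE, hne, hne.symm]
        have hj' : j = (if Even (k + 1) then i' else i) := fin2third hxy hj
        refine ⟨i, i', k + 2, hne, by simp only [List.length_cons]; omega, ?_, ?_⟩
        · rw [wordProd_cons, h1, hj', show k + 2 = (k + 1) + 1 from rfl,
            alternatingWord_succ' i i' (k + 1), wordProd_cons]
        · rw [wordProd_cons, h2, hj', show k + 2 = (k + 1) + 1 from rfl,
            alternatingWord_succ' i i' (k + 1), wordProd_cons]

end TwoSystems

section Dihedral

variable {W : Type*} [Group W] (m : ℕ) (Mdih : CoxeterMatrix (Fin 2))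
  (cs : CoxeterSystem Mdih W)

lemma Mdih_off {i i' : Fin 2} (hMdih : Mdih 0 1 = m) (hne : i ≠ i') : Mdih i i' = m := by
  rcases fin2pair hne with ⟨rfl, rfl⟩ | ⟨rfl, rfl⟩
  · exact hMdih
  · rw [Mdih.symmetric]; exact hMdih

lemma braid (hMdih : Mdih 0 1 = m) {i i' : Fin 2} (hne : i ≠ i') :
    cs.wordProd (alternatingWord i i' m) = cs.wordProd (alternatingWord i' i m) := by
  have hM : Mdih i i' = m := Mdih_off m Mdih hMdih hne
  have := cs.prod_alternatingWord_eq_prod_alternatingWord_sub i i' m (by rw [hM]; omega)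
  rwa [hM, show m * 2 - m = m by omega] at this

/-- Canonical alternating forms of length at most `m` in the dihedral system. -/
lemma canon_dih (hm : 2 ≤ m) (hMdih : Mdih 0 1 = m) (l : List (Fin 2)) :
    ∃ (i i' : Fin 2) (k : ℕ), i ≠ i' ∧ k ≤ l.length ∧ k ≤ m ∧
      cs.wordProd l = cs.wordProd (alternatingWord i i' k) := by
  induction l with
  | nil => exact ⟨0, 1, 0, by decide, le_refl _, by omega, rfl⟩
  | cons j l ih =>
    obtain ⟨i, i', k, hne, hk, hkm, h1⟩ := ih
    match k, hk, hkm with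
    | 0, hk, hkm =>
      refine ⟨j + 1, j, 1, by revert j; decide, by simp, by omega, ?_⟩
      rw [wordProd_cons, h1]
      show _ * cs.wordProd [] = cs.wordProd [j]
      rw [wordProd_nil, mul_one, wordProd_singleton]
    | k + 1, hk, hkm =>
      by_cases hj : j = (if Even k then i' else i)
      · refine ⟨i, i', k, hne, by simp only [List.length_cons]; omega, by omega, ?_⟩
        rw [wordProd_cons, h1, alternatingWord_succ', wordProd_cons, ← mul_assoc, hj,
          simple_mul_simple_self, one_mul]
      · have hxy : (if Even k then i' else i) ≠ (if Even (k + 1) then i' else i) := by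
          simp only [Nat.even_add_one]
          by_cases hE : Even k <;> simp [hE, hne, hne.symm]
        have hj' : j = (if Even (k + 1) then i' else i) := fin2third hxy hj
        by_cases hkm' : k + 2 ≤ m
        · refine ⟨i, i', k + 2, hne, by simp only [List.length_cons]; omega, hkm', ?_⟩
          rw [wordProd_cons, h1, hj', show k + 2 = (k + 1) + 1 from rfl,
            alternatingWord_succ' i i' (k + 1), wordProd_cons]
        · -- here k + 1 = m; use the braid relation
          have hkm2 : k + 1 = m := by omega
          have hb : cs.wordProd (alternatingWord i i' (k + 1)) =
              cs.wordProd (alternatingWord i' i (k + 1)) := by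
            rw [hkm2]; exact braid m Mdih cs hMdih hne
          have hj2 : j = (if Even k then i else i') := by
            have hxy2 : (if Even k then i' else i) ≠ (if Even k then i else i') := by
              by_cases hE : Even k <;> simp [hE, hne, hne.symm]
            exact fin2third hxy2 hj
          refine ⟨i', i, k, hne.symm, by simp only [List.length_cons]; omega, by omega, ?_⟩
          rw [wordProd_cons, h1, hb, alternatingWord_succ', wordProd_cons, ← mul_assoc, hj2,
            simple_mul_simple_self, one_mul]

lemma r_pow (x : ZMod m) (n : ℕ) :
    (DihedralGroup.r x) ^ n = DihedralGroup.r ((n : ZMod m) * x) := by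
  induction n with
  | zero => rw [pow_zero, DihedralGroup.one_def]; push_cast; rw [zero_mul]
  | succ n ih =>
    rw [pow_succ, ih, DihedralGroup.r_mul_r]
    congr 1; push_cast; ring

lemma zmod_nat_inj {a b : ℕ} (ha : a < m) (hb : b < m) (h : (a : ZMod m) = b) : a = b := by
  have := congrArg ZMod.val h
  rwa [ZMod.val_cast_of_lt ha, ZMod.val_cast_of_lt hb] at this

lemma zmod_add_eq_zero {a b : ℕ} (hab : a + b < m) (h : (a : ZMod m) = -(b : ZMod m)) :
    a = 0 ∧ b = 0 := by
  have h2 : ((a + b : ℕ) : ZMod m) = 0 := by push_cast; rw [h]; ring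
  have h3 : m ∣ a + b := (ZMod.natCast_eq_zero_iff _ _).mp h2
  have h4 := Nat.eq_zero_of_dvd_of_lt h3 hab
  omega

/-- Distinctness of short alternating words via the dihedral group model. -/
lemma distinct (hm : 2 ≤ m) (hMdih : Mdih 0 1 = m) {i i' j j' : Fin 2} {k k' : ℕ}
    (hii : i ≠ i') (hjj : j ≠ j') (hk : k < m) (hk' : k' ≤ m)
    (heq : cs.wordProd (alternatingWord i i' k) = cs.wordProd (alternatingWord j j' k')) :
    k = k' ∧ (k = 0 ∨ (i = j ∧ i' = j')) := by
  classical
  set f : Fin 2 → DihedralGroup m := fun x => DihedralGroup.sr ((x.val : ZMod m)) with hf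
  have hlift : Mdih.IsLiftable f := by
    intro x y
    by_cases hxy : x = y
    · subst hxy
      rw [Mdih.diagonal, pow_one, hf]
      simp only [DihedralGroup.sr_mul_sr, sub_self]
      rw [DihedralGroup.one_def]
    · rw [Mdih_off m Mdih hMdih hxy, hf]
      simp only [DihedralGroup.sr_mul_sr]
      rw [r_pow]
      rcases fin2pair hxy with ⟨rfl, rfl⟩ | ⟨rfl, rfl⟩ <;>
        · simp only [Fin.val_zero, Fin.val_one, Nat.cast_zero, Nat.cast_one, sub_zero, zero_sub,
            mul_one, mul_neg, ZMod.natCast_self, neg_zero]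
          rw [DihedralGroup.one_def]
  set ψ : W →* DihedralGroup m := cs.lift ⟨f, hlift⟩ with hψ
  have hs : ∀ x, ψ (cs.simple x) = f x := fun x => cs.lift_apply_simple hlift x
  have key : ∀ (p q : Fin 2) (n : ℕ), ψ (cs.wordProd (alternatingWord p q n)) =
      if n % 2 = 0 then
        DihedralGroup.r (((n / 2 : ℕ) : ZMod m) * ((q.val : ZMod m) - (p.val : ZMod m)))
      else DihedralGroup.sr ((q.val : ZMod m) +
        ((n / 2 : ℕ) : ZMod m) * ((q.val : ZMod m) - (p.val : ZMod m))) := by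
    intro p q n
    rw [cs.prod_alternatingWord_eq_mul_pow]
    by_cases hn : Even n
    · rw [if_pos hn, if_pos (Nat.even_iff.mp hn), one_mul]
      simp only [map_mul, map_pow, hs]
      simp only [hf, DihedralGroup.sr_mul_sr]
      rw [r_pow]
    · rw [if_neg hn, if_neg (by rw [Nat.even_iff] at hn; omega)]
      simp only [map_mul, map_pow, hs]
      simp only [hf, DihedralGroup.sr_mul_sr]
      rw [r_pow, DihedralGroup.sr_mul_r]
  have hD := congrArg ψ heq
  rw [key, key] at hD
  rcases Nat.mod_two_eq_zero_or_one k with h1 | h1 <;>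
    rcases Nat.mod_two_eq_zero_or_one k' with h2 | h2 <;>
    rcases fin2pair hii with ⟨rfl, rfl⟩ | ⟨rfl, rfl⟩ <;>
    rcases fin2pair hjj with ⟨rfl, rfl⟩ | ⟨rfl, rfl⟩ <;>
    simp only [h1, h2, reduceIte, Fin.val_zero, Fin.val_one, Nat.cast_zero, Nat.cast_one,
      sub_zero, zero_sub, mul_one, mul_neg, add_zero, zero_add] at hD <;>
    [skip; skip; skip; skip;
     exact absurd hD (by simp); exact absurd hD (by simp);
     exact absurd hD (by simp); exact absurd hD (by simp);
     exact absurd hD (by simp); exact absurd hD (by simp);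
     exact absurd hD (by simp); exact absurd hD (by simp);
     skip; skip; skip; skip]
  · -- even-even (0,1) (0,1)
    rw [DihedralGroup.r.injEq] at hD
    have := zmod_nat_inj m (a := k / 2) (b := k' / 2) (by omega) (by omega) hD
    exact ⟨by omega, Or.inr ⟨rfl, rfl⟩⟩
  · -- even-even (0,1) (1,0)
    rw [DihedralGroup.r.injEq] at hD
    have := zmod_add_eq_zero m (a := k / 2) (b := k' / 2) (by omega) hD
    exact ⟨by omega, Or.inl (by omega)⟩
  · -- even-even (1,0) (0,1)
    rw [DihedralGroup.r.injEq] at hD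
    have hD' : (((k' / 2 : ℕ)) : ZMod m) = -((k / 2 : ℕ) : ZMod m) := by rw [← hD]
    have := zmod_add_eq_zero m (a := k' / 2) (b := k / 2) (by omega) hD'
    exact ⟨by omega, Or.inl (by omega)⟩
  · -- even-even (1,0) (1,0)
    rw [DihedralGroup.r.injEq, neg_inj] at hD
    have := zmod_nat_inj m (a := k / 2) (b := k' / 2) (by omega) (by omega) hD
    exact ⟨by omega, Or.inr ⟨rfl, rfl⟩⟩
  · -- odd-odd (0,1) (0,1)
    rw [if_neg (by omega : ¬(1:ℕ) = 0), if_neg (by omega : ¬(1:ℕ) = 0)] at hD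
    rw [DihedralGroup.sr.injEq] at hD
    have hD' : (((1 + k / 2 : ℕ) : ZMod m)) = ((1 + k' / 2 : ℕ) : ZMod m) := by
      push_cast; rw [hD]
    have := zmod_nat_inj m (by omega) (by omega) hD'
    exact ⟨by omega, Or.inr ⟨rfl, rfl⟩⟩
  · -- odd-odd (0,1) (1,0)
    rw [if_neg (by omega : ¬(1:ℕ) = 0), if_neg (by omega : ¬(1:ℕ) = 0)] at hD
    rw [DihedralGroup.sr.injEq] at hD
    exfalso
    have hD' : (((1 + k / 2 : ℕ) : ZMod m)) = -((k' / 2 : ℕ) : ZMod m) := by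
      push_cast; rw [← hD]
    have := zmod_add_eq_zero m (a := 1 + k / 2) (b := k' / 2) (by omega) hD'
    omega
  · -- odd-odd (1,0) (0,1)
    rw [if_neg (by omega : ¬(1:ℕ) = 0), if_neg (by omega : ¬(1:ℕ) = 0)] at hD
    rw [DihedralGroup.sr.injEq] at hD
    exfalso
    have hD' : (((1 + k' / 2 : ℕ) : ZMod m)) = -((k / 2 : ℕ) : ZMod m) := by
      push_cast; rw [hD]
    have := zmod_add_eq_zero m (a := 1 + k' / 2) (b := k / 2) (by omega) hD'
    omega
  · -- odd-odd (1,0) (1,0)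
    rw [if_neg (by omega : ¬(1:ℕ) = 0), if_neg (by omega : ¬(1:ℕ) = 0)] at hD
    rw [DihedralGroup.sr.injEq, neg_inj] at hD
    have := zmod_nat_inj m (a := k / 2) (b := k' / 2) (by omega) (by omega) hD
    exact ⟨by omega, Or.inr ⟨rfl, rfl⟩⟩

/-- The alternating word of length `m` is reduced. -/
lemma reduced_alt_m (hm : 2 ≤ m) (hMdih : Mdih 0 1 = m) {i i' : Fin 2} (hne : i ≠ i') :
    cs.IsReduced (alternatingWord i i' m) := by
  unfold CoxeterSystem.IsReduced
  rw [length_alternatingWord]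
  refine le_antisymm (le_trans (cs.length_wordProd_le _)
    (by rw [length_alternatingWord])) ?_
  obtain ⟨ω, hω, hw⟩ := cs.exists_reduced_word' (cs.wordProd (alternatingWord i i' m))
  obtain ⟨j, j', k, hjj, hkl, hkm, hπ⟩ := canon_dih m Mdih cs hm hMdih ω
  have heq : cs.wordProd (alternatingWord j j' k) = cs.wordProd (alternatingWord i i' m) := by
    rw [← hπ, ← hw]
  by_cases hlt : k < m
  · exfalso
    have := distinct m Mdih cs hm hMdih hjj hne hlt (le_refl m) heq
    omega
  · have hkm2 : k = m := by omega
    have hred : cs.length (cs.wordProd ω) = ω.length := hω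
    rw [← hw] at hred
    rw [hred]
    omega

end Dihedral

lemma alt_suffix {B : Type*} (i i' : B) : ∀ n k : ℕ, k ≤ n →
    (alternatingWord i i' k).IsSuffix (alternatingWord i i' n) := by
  intro n
  induction n with
  | zero => intro k hk; rw [Nat.le_zero.mp hk]
  | succ n ih =>
    intro k hk
    by_cases h : k = n + 1
    · rw [h]
    · refine (ih k (by omega)).trans ?_
      rw [alternatingWord_succ']
      exact List.suffix_cons _ _

lemma alt_sublist {i i' a b : Fin 2} {m k : ℕ} (hab : a ≠ b) (hii : i ≠ i') (hk : k < m) :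
    (alternatingWord i i' k).Sublist (alternatingWord a b m) := by
  by_cases hia : i = a
  · have : i' = b := by
      rcases fin2pair hab with ⟨rfl, rfl⟩ | ⟨rfl, rfl⟩ <;>
        rcases fin2pair hii with ⟨rfl, rfl⟩ | ⟨rfl, rfl⟩ <;> simp_all
    subst hia; subst this
    exact (alt_suffix i i' m k (by omega)).sublist
  · have hib : i = b := fin2third hab hia
    have hia' : i' = a := by
      rcases fin2pair hab with ⟨rfl, rfl⟩ | ⟨rfl, rfl⟩ <;>
        rcases fin2pair hii with ⟨rfl, rfl⟩ | ⟨rfl, rfl⟩ <;> simp_all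
    subst hib; subst hia'
    -- alternatingWord b a k is a suffix of alternatingWord b a (m-1),
    -- which is a prefix of alternatingWord a b m
    have h1 : (alternatingWord i i' k).IsSuffix (alternatingWord i i' (m - 1)) :=
      alt_suffix i i' (m - 1) k (by omega)
    have h2 : (alternatingWord i i' (m - 1)).IsPrefix (alternatingWord i' i m) := by
      have : m = (m - 1) + 1 := by omega
      rw [this, alternatingWord_succ, List.concat_eq_append]
      exact List.prefix_append _ _
    exact h1.sublist.trans h2.sublist

end Stmt11

open Stmt11 CoxeterSystem List in
/-- Let `W` be the dihedral group of order `2m` with Coxeter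
generators `s, t`, and `F = ⟨s,t | s² = t² = 1⟩ = ℤ/2 * ℤ/2` the free product
(the Coxeter group with off-diagonal entry `0`, i.e. `∞`).  Let
`altL = sts⋯` (`m` letters), `S_L` the set of strings obtained from it by
replacing some entries with `1` (equivalently, its sublists), and
`S_{L,⋆} ⊆ F` the set of elements of the free product they define; let
`w_{L,⋆} ∈ F` be the full word and `w₀ ∈ W` its image, the longest element.
Then the multiplication map `φ : F → W` (sending generators to generators)
restricts to a bijection from `S_{L,⋆} \ {w_{L,⋆}}` onto
`{w' ∈ W | w' < w₀}` (strict Bruhat order). -/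
theorem free_product_subwords_biject_bruhat_interval
    {F W : Type*} [Group F] [Group W] (m : ℕ) (hm : 2 ≤ m)
    (Mfree : CoxeterMatrix (Fin 2)) (hMfree : Mfree 0 1 = 0)
    (Mdih : CoxeterMatrix (Fin 2)) (hMdih : Mdih 0 1 = m)
    (csF : CoxeterSystem Mfree F) (cs : CoxeterSystem Mdih W)
    (φ : F →* W) (hφ : ∀ i : Fin 2, φ (csF.simple i) = cs.simple i) :
    Set.BijOn φ
      ((csF.wordProd '' {ω : List (Fin 2) |
          ω.Sublist ((List.range m).map (fun i => if i % 2 = 0 then (0 : Fin 2) else 1))}) \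
        {csF.wordProd ((List.range m).map (fun i => if i % 2 = 0 then (0 : Fin 2) else 1))})
      {w' : W |
        bruhatLE cs w'
          (cs.wordProd ((List.range m).map (fun i => if i % 2 = 0 then (0 : Fin 2) else 1))) ∧
        w' ≠ cs.wordProd ((List.range m).map (fun i => if i % 2 = 0 then (0 : Fin 2) else 1))} := by
  set L : List (Fin 2) := (List.range m).map (fun i => if i % 2 = 0 then (0 : Fin 2) else 1)
    with hLdef
  obtain ⟨a, b, hab, hL⟩ : ∃ a b : Fin 2, a ≠ b ∧ L = alternatingWord a b m := by
    refine ⟨_, _, ?_, rangeMap_eq_alt m⟩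
    rcases Nat.even_or_odd m with h | h
    · rw [if_pos (Nat.even_iff.mp h), if_pos (Nat.even_iff.mp h)]; decide
    · rw [if_neg (by rw [Nat.odd_iff.mp h]; omega), if_neg (by rw [Nat.odd_iff.mp h]; omega)]
      decide
  have hLlen : L.length = m := by rw [hL, length_alternatingWord]
  have phi_word : ∀ l : List (Fin 2), φ (csF.wordProd l) = cs.wordProd l := by
    intro l
    induction l with
    | nil => rw [wordProd_nil, wordProd_nil, map_one]
    | cons j l ih => rw [wordProd_cons, wordProd_cons, map_mul, hφ, ih]
  have hredL : cs.IsReduced L := by rw [hL]; exact reduced_alt_m m Mdih cs hm hMdih hab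
  have hlenw0 : cs.length (cs.wordProd L) = m := by
    have : cs.length (cs.wordProd L) = L.length := hredL
    omega
  -- if a sublist of L has the same dihedral product as L, it is L
  have hfull : ∀ ω : List (Fin 2), ω.Sublist L → cs.wordProd ω = cs.wordProd L → ω = L := by
    intro ω hsub hprod
    have h1 : cs.length (cs.wordProd ω) ≤ ω.length := cs.length_wordProd_le ω
    have h2 : ω.length ≤ m := by
      have := hsub.length_le; omega
    have h3 : ω.length = L.length := by rw [hprod] at h1; omega
    exact hsub.eq_of_length h3
  -- both length-m alternating words have product w₀
  have hw0alt : ∀ {i i' : Fin 2}, i ≠ i' →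
      cs.wordProd (alternatingWord i i' m) = cs.wordProd L := by
    intro i i' hii
    rw [hL]
    rcases fin2pair hab with ⟨ha, hb⟩ | ⟨ha, hb⟩ <;>
      rcases fin2pair hii with ⟨hi, hi'⟩ | ⟨hi, hi'⟩ <;> subst ha hb hi hi'
    · rfl
    · exact braid m Mdih cs hMdih (by decide)
    · exact braid m Mdih cs hMdih (by decide)
    · rfl
  refine ⟨?_, ?_, ?_⟩
  · -- MapsTo
    rintro x ⟨⟨ω, hω, rfl⟩, hne⟩
    simp only [Set.mem_setOf_eq] at hω
    rw [Set.mem_setOf_eq, phi_word]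
    constructor
    · exact ⟨L, hredL, rfl, ω, hω, rfl⟩
    · intro h
      exact hne (by rw [hfull ω hω h]; exact Set.mem_singleton _)
  · -- InjOn
    rintro x ⟨⟨ω, hω, rfl⟩, hnex⟩ y ⟨⟨ω', hω', rfl⟩, hney⟩ hxy
    simp only [Set.mem_setOf_eq] at hω hω'
    rw [phi_word, phi_word] at hxy
    obtain ⟨i, i', k, hii, hkl, hF, hWp⟩ := canon_free csF cs ω
    obtain ⟨j, j', k', hjj, hkl', hF', hWp'⟩ := canon_free csF cs ω'
    have hkm : k ≤ m := le_trans hkl (by have := hω.length_le; omega)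
    have hkm' : k' ≤ m := le_trans hkl' (by have := hω'.length_le; omega)
    have hklt : k < m := by
      rcases Nat.lt_or_ge k m with h | h
      · exact h
      · exfalso
        have hkm2 : k = m := by omega
        apply hnex
        rw [Set.mem_singleton_iff]
        congr 1
        apply hfull ω hω
        rw [hWp, hkm2, hw0alt hii]
    have hklt' : k' < m := by
      rcases Nat.lt_or_ge k' m with h | h
      · exact h
      · exfalso
        have hkm2 : k' = m := by omega
        apply hney
        rw [Set.mem_singleton_iff]
        congr 1
        apply hfull ω' hω'
        rw [hWp', hkm2, hw0alt hjj]
    have heq : cs.wordProd (alternatingWord i i' k) = cs.wordProd (alternatingWord j j' k') := by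
      rw [← hWp, ← hWp', hxy]
    obtain ⟨hkk, hcase⟩ := distinct m Mdih cs hm hMdih hii hjj hklt (le_of_lt hklt') heq
    have hwords : alternatingWord i i' k = alternatingWord j j' k' := by
      rcases hcase with h0 | ⟨rfl, rfl⟩
      · rw [h0] at hkk ⊢; rw [← hkk]; rfl
      · rw [hkk]
    rw [hF, hF', hwords]
  · -- SurjOn
    rintro w' ⟨⟨ωr, hred, hprod, l, hsubl, hπl⟩, hne⟩
    have hlr : ωr.length = m := by
      have h1 : cs.length (cs.wordProd ωr) = ωr.length := hred
      rw [hprod] at h1; omega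
    have hll : l.length ≤ m := by have := hsubl.length_le; omega
    obtain ⟨i, i', k, hii, hkl, hkm, hπ⟩ := canon_dih m Mdih cs hm hMdih l
    have hklt : k < m := by
      rcases Nat.lt_or_ge k m with h | h
      · exact h
      · exfalso
        apply hne
        rw [← hπl, hπ, show k = m by omega, hw0alt hii]
    have hsubalt : (alternatingWord i i' k).Sublist L := by
      rw [hL]; exact alt_sublist hab hii hklt
    refine ⟨csF.wordProd (alternatingWord i i' k), ⟨⟨alternatingWord i i' k, hsubalt, rfl⟩, ?_⟩, ?_⟩
    · intro hmem
      rw [Set.mem_singleton_iff] at hmem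
      apply hne
      have := congrArg φ hmem
      rw [phi_word, phi_word] at this
      rw [← hπl, hπ, this]
    · rw [phi_word, ← hπ, hπl]
end
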